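/- The Gaussian density ρ₀(x) = ((2π)^n det Σ)^{-1/2} exp(−½ xᵀ Σ⁻¹ x), with Σ symmetric positive definite satisfying the Lyapunov equation AΣ + ΣAᵀ + D = 0 (D symmetric positive semidefinite), is annihilated by the forward Kolmogorov (Fokker–Planck) operator of the linear SDE dX = AX dt + √D dW: that is, −∇·(A x ρ₀(x)) + ½ ∇·(D ∇ρ₀(x)) = 0 for every x ∈ ℝⁿ. -/

import Mathlib

open Matrix

noncomputable def dotCLM {n : ℕ} (w : Fin n → ℝ) : (Fin n → ℝ) →L[ℝ] ℝ :=
  ∑ i, w i • (ContinuousLinearMap.proj i : (Fin n → ℝ) →L[ℝ] ℝ)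

lemma dotCLM_apply {n : ℕ} (w v : Fin n → ℝ) : dotCLM w v = w ⬝ᵥ v := by
  simp [dotCLM, dotProduct, ContinuousLinearMap.sum_apply]

lemma hasFDerivAt_quad {n : ℕ} (P : Matrix (Fin n) (Fin n) ℝ) (x : Fin n → ℝ) :
    HasFDerivAt (fun y : Fin n → ℝ => y ⬝ᵥ P.mulVec y)
      (dotCLM (P.mulVec x + Pᵀ.mulVec x)) x := by
  have h : (fun y : Fin n → ℝ => y ⬝ᵥ P.mulVec y)
      = fun y => ∑ i, ∑ j, P i j * (y i * y j) := by
    funext y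
    simp [dotProduct, Matrix.mulVec, Finset.mul_sum]
    congr 1; funext i; congr 1; funext j; ring
  rw [h]
  have hsum : HasFDerivAt (fun y : Fin n → ℝ => ∑ i, ∑ j, P i j * (y i * y j))
      (∑ i, ∑ j, P i j • ((x i) • (ContinuousLinearMap.proj j : (Fin n → ℝ) →L[ℝ] ℝ)
        + (x j) • (ContinuousLinearMap.proj i : (Fin n → ℝ) →L[ℝ] ℝ))) x := by
    apply HasFDerivAt.fun_sum; intro i _
    apply HasFDerivAt.fun_sum; intro j _
    exact ((hasFDerivAt_apply i x).mul (hasFDerivAt_apply j x)).const_mul _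
  refine hsum.congr_fderiv ?_
  ext v
  simp [dotCLM, ContinuousLinearMap.sum_apply, Matrix.mulVec, dotProduct,
    Finset.sum_add_distrib, mul_add, Finset.sum_mul, Finset.mul_sum]
  simp only [add_mul, Finset.sum_add_distrib, Finset.sum_mul]
  conv_rhs => rw [add_comm]
  congr 1
  · rw [Finset.sum_comm]
    exact Finset.sum_congr rfl fun i _ => Finset.sum_congr rfl fun j _ => by ring
  · exact Finset.sum_congr rfl fun i _ => Finset.sum_congr rfl fun j _ => by ring

lemma hasFDerivAt_gauss {n : ℕ} (c : ℝ) (P : Matrix (Fin n) (Fin n) ℝ) (hP : Pᵀ = P)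
    (y : Fin n → ℝ) :
    HasFDerivAt (fun y : Fin n → ℝ => c * Real.exp (-(1/2) * (y ⬝ᵥ P.mulVec y)))
      ((-(c * Real.exp (-(1/2) * (y ⬝ᵥ P.mulVec y)))) • dotCLM (P.mulVec y)) y := by
  have h3 := (((hasFDerivAt_quad P y).const_mul (-(1/2):ℝ)).exp).const_mul c
  refine h3.congr_fderiv ?_
  rw [hP]
  ext v
  simp [dotCLM_apply, add_dotProduct]
  ring

/-- The centered Gaussian density with covariance `Σ` satisfying the Lyapunov equation
`AΣ + ΣAᵀ + D = 0` is annihilated by the Fokker–Planck operator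
`L ρ = −∇·(Ax ρ) + ½ ∇·(D∇ρ) = −Tr(A)ρ − (Ax)·∇ρ + ½ Σ_{αβ} D_{αβ} ∂_α∂_β ρ`. -/
theorem gaussian_invariant_density {n : ℕ} (A D S : Matrix (Fin n) (Fin n) ℝ)
    (hS : S.PosDef) (hSsym : S.IsSymm) (hDsym : D.IsSymm)
    (hLyap : A * S + S * Aᵀ + D = 0)
    (ρ₀ : (Fin n → ℝ) → ℝ)
    (hρ₀ : ∀ x, ρ₀ x = ((2 * Real.pi) ^ n * S.det) ^ (-(1:ℝ)/2) *
        Real.exp (-(1/2) * (x ⬝ᵥ S⁻¹.mulVec x)))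
    (x : Fin n → ℝ) :
    -(A.trace * ρ₀ x)
      - (A.mulVec x) ⬝ᵥ (fun α => fderiv ℝ ρ₀ x (Pi.single α 1))
      + (1/2) * ∑ α, ∑ β, D α β *
          fderiv ℝ (fun y => fderiv ℝ ρ₀ y (Pi.single β 1)) x (Pi.single α 1) = 0 := by
  set P := S⁻¹ with hPdef
  set c : ℝ := ((2 * Real.pi) ^ n * S.det) ^ (-(1:ℝ)/2) with hcdef
  have hρfun : ρ₀ = fun y => c * Real.exp (-(1/2) * (y ⬝ᵥ P.mulVec y)) := funext hρ₀
  have hPsym : Pᵀ = P := by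
    rw [hPdef, Matrix.transpose_nonsing_inv, hSsym.eq]
  have hdet : IsUnit S.det := isUnit_iff_ne_zero.mpr hS.det_pos.ne'
  have hSP : S * P = 1 := Matrix.mul_nonsing_inv S hdet
  have hPS : P * S = 1 := Matrix.nonsing_inv_mul S hdet
  have hSx : S.mulVec (P.mulVec x) = x := by
    rw [Matrix.mulVec_mulVec, hSP, Matrix.one_mulVec]
  -- first derivative
  have hasrho : ∀ y : Fin n → ℝ,
      HasFDerivAt ρ₀ ((-(ρ₀ y)) • dotCLM (P.mulVec y)) y := by
    intro y
    rw [hρfun]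
    exact hasFDerivAt_gauss c P hPsym y
  have hD1 : ∀ (y : Fin n → ℝ) (β : Fin n),
      fderiv ℝ ρ₀ y (Pi.single β 1) = -(ρ₀ y * P.mulVec y β) := by
    intro y β
    rw [(hasrho y).fderiv]
    simp [dotCLM_apply, dotProduct_single]
  -- second derivative
  have hD2 : ∀ α β : Fin n,
      fderiv ℝ (fun y => fderiv ℝ ρ₀ y (Pi.single β 1)) x (Pi.single α 1)
        = ρ₀ x * (P.mulVec x α * P.mulVec x β - P β α) := by
    intro α β
    have heq : (fun y => fderiv ℝ ρ₀ y (Pi.single β 1))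
        = fun y => -(ρ₀ y * P.mulVec y β) := funext fun y => hD1 y β
    have hlin : HasFDerivAt (fun y : Fin n → ℝ => P.mulVec y β)
        (dotCLM (fun j => P β j)) x := by
      have h1 : (fun y : Fin n → ℝ => P.mulVec y β) = ⇑(dotCLM (fun j => P β j)) := by
        funext y
        simp [dotCLM_apply, Matrix.mulVec, dotProduct]
      rw [h1]
      exact (dotCLM (fun j => P β j)).hasFDerivAt
    have hprod := ((hasrho x).fun_mul hlin).fun_neg
    rw [heq, hprod.fderiv]
    simp [dotCLM_apply, dotProduct_single]
    ring
  rw [show (fun α => fderiv ℝ ρ₀ x (Pi.single α 1))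
      = fun α => -(ρ₀ x * P.mulVec x α) from funext fun α => hD1 x α]
  simp only [hD2]
  -- algebraic facts
  have hDval : D = -(A * S + S * Aᵀ) := by
    have h := hLyap
    rw [add_comm] at h
    exact eq_neg_of_add_eq_zero_left h
  -- trace identity: 2 Tr A + Tr(D P) = 0
  have htr : 2 * A.trace + (D * P).trace = 0 := by
    have h0 : (A * S + S * Aᵀ + D) * P = 0 := by rw [hLyap, Matrix.zero_mul]
    have h1 : A * S * P + S * Aᵀ * P + D * P = 0 := by
      rw [← h0, add_mul, add_mul]
    have h2 : A * S * P = A := by rw [mul_assoc, hSP, mul_one]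
    have h3 : (S * Aᵀ * P).trace = A.trace := by
      rw [Matrix.trace_mul_comm, ← mul_assoc, hPS, one_mul, Matrix.trace_transpose]
    have h4 := congrArg Matrix.trace h1
    rw [Matrix.trace_add, Matrix.trace_add, h2, h3, Matrix.trace_zero] at h4
    linarith
  have hTsum : ∑ α, ∑ β, D α β * P β α = (D * P).trace := by
    simp [Matrix.trace, Matrix.mul_apply, Matrix.diag]
  -- quadratic identity
  have hQsum : ∀ y : Fin n → ℝ, ∑ α, ∑ β, D α β * (y α * y β) = y ⬝ᵥ D.mulVec y := by
    intro y
    simp only [dotProduct, Matrix.mulVec, Finset.mul_sum]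
    exact Finset.sum_congr rfl fun α _ => Finset.sum_congr rfl fun β _ => by ring
  have hQval : (P.mulVec x) ⬝ᵥ D.mulVec (P.mulVec x)
      = -(2 * (A.mulVec x ⬝ᵥ P.mulVec x)) := by
    have e1 : (A * S).mulVec (P.mulVec x) = A.mulVec x := by
      rw [← Matrix.mulVec_mulVec, hSx]
    have e2 : P.mulVec x ⬝ᵥ (A * S).mulVec (P.mulVec x)
        = A.mulVec x ⬝ᵥ P.mulVec x := by
      rw [e1, dotProduct_comm]
    have e3 : P.mulVec x ⬝ᵥ (S * Aᵀ).mulVec (P.mulVec x)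
        = A.mulVec x ⬝ᵥ P.mulVec x := by
      have hST : (A * S)ᵀ = S * Aᵀ := by
        rw [Matrix.transpose_mul, hSsym.eq]
      rw [← hST, Matrix.dotProduct_mulVec, Matrix.vecMul_transpose, e1]
    rw [hDval, Matrix.neg_mulVec, Matrix.add_mulVec, dotProduct_neg,
      dotProduct_add, e2, e3]
    ring
  -- pull ρ₀ x out of the sums and finish
  have hdot : A.mulVec x ⬝ᵥ (fun α => -(ρ₀ x * P.mulVec x α))
      = -(ρ₀ x * (A.mulVec x ⬝ᵥ P.mulVec x)) := by
    simp only [dotProduct, Finset.mul_sum, ← Finset.sum_neg_distrib]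
    exact Finset.sum_congr rfl fun α _ => by ring
  have hsplit : ∑ α, ∑ β, D α β * (ρ₀ x * (P.mulVec x α * P.mulVec x β - P β α))
      = ρ₀ x * (∑ α, ∑ β, D α β * (P.mulVec x α * P.mulVec x β))
        - ρ₀ x * (∑ α, ∑ β, D α β * P β α) := by
    simp only [Finset.mul_sum, ← Finset.sum_sub_distrib]
    exact Finset.sum_congr rfl fun α _ => Finset.sum_congr rfl fun β _ => by ring
  rw [hdot, hsplit, hQsum (P.mulVec x), hQval, hTsum]
  linear_combination (-(ρ₀ x) / 2) * htr
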